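/- Let C be a coalgebra with coalgebra filtration {C_n}, A a unital algebra, and f : C → A a linear map vanishing on C_n (n ≥ 0). Then e + f is convolution-invertible (where e(c) = ε(c)·1_A), and its convolution inverse agrees with e − f on C_{n+1}. -/

import Mathlib

/-!
Put `x = -f` in the convolution ring `Hom(C, A)`. Maps vanishing on `C_m` form a two-sided ideal,
and since `Δ(C_m) ⊆ ∑ᵢ Cᵢ ⊗ C_{m-i}`, a product of maps vanishing on `C_p` and on `C_q` vanishes on
`C_{p+q+1}`. Hence `x^(p+1)` vanishes on `C_p`, so there the geometric series `∑ x^j` is a finite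
sum inverting `e - x = e + f`. These truncations are compatible and, the filtration being
exhaustive, glue to a global inverse. On `C_{n+1}` already `x^2` vanishes, leaving `e + x = e - f`.
-/

open TensorProduct

/-- The convolution product on `Hom_k(C, A)`. -/
noncomputable def conv {k : Type*} [Field k] {C A : Type*}
    [AddCommGroup C] [Module k C] [Coalgebra k C]
    [Ring A] [Algebra k A]
    (f g : C →ₗ[k] A) : C →ₗ[k] A :=
  LinearMap.mul' k A ∘ₗ TensorProduct.map f g ∘ₗ Coalgebra.comul

/-- The convolution unit `e : c ↦ ε(c)·1_A`. -/
noncomputable def convUnit (k : Type*) [Field k] (C A : Type*)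
    [AddCommGroup C] [Module k C] [Coalgebra k C]
    [Ring A] [Algebra k A] : C →ₗ[k] A :=
  Algebra.linearMap k A ∘ₗ (Coalgebra.counit : C →ₗ[k] k)

open Coalgebra WithConv LinearMap

theorem conv_eq_ofConv_convMul {k : Type*} [Field k] {C A : Type*}
    [AddCommGroup C] [Module k C] [Coalgebra k C] [Ring A] [Algebra k A] (f g : C →ₗ[k] A) :
    conv f g = (toConv f * toConv g).ofConv :=
  rfl

theorem convUnit_eq_ofConv_one (k : Type*) [Field k] (C A : Type*)
    [AddCommGroup C] [Module k C] [Coalgebra k C] [Ring A] [Algebra k A] :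
    convUnit k C A = (1 : WithConv (C →ₗ[k] A)).ofConv :=
  rfl

section Gluing

variable {ι R M N : Type*} [Nonempty ι] [Semiring R]
  [AddCommMonoid M] [Module R M] [AddCommMonoid N] [Module R N]

theorem Submodule.exists_mem_of_iSup_eq_top {F : ι → Submodule R M} (hdir : Directed (· ≤ ·) F)
    (hexh : ⨆ i, F i = ⊤) (c : M) : ∃ i, c ∈ F i :=
  (Submodule.mem_iSup_of_directed F hdir).mp (hexh ▸ Submodule.mem_top)

theorem Submodule.exists_linearMap_eqOn_of_monotone [SemilatticeSup ι] {F : ι → Submodule R M}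
    (hmono : Monotone F) (hexh : ⨆ i, F i = ⊤) (G : ι → M →ₗ[R] N)
    (hG : ∀ i j, i ≤ j → ∀ c ∈ F i, G j c = G i c) :
    ∃ g : M →ₗ[R] N, ∀ i, ∀ c ∈ F i, g c = G i c := by
  choose idx hidx using Submodule.exists_mem_of_iSup_eq_top hmono.directed_le hexh
  have hwd (i : ι) (c : M) (hc : c ∈ F i) : G (idx c) c = G i c :=
    (hG _ _ le_sup_left c (hidx c)).symm.trans (hG _ _ le_sup_right c hc)
  refine ⟨{ toFun := fun c => G (idx c) c, map_add' := ?_, map_smul' := ?_ }, hwd⟩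
  · intro a b
    have ha : a ∈ F (idx a ⊔ idx b) := hmono le_sup_left (hidx a)
    have hb : b ∈ F (idx a ⊔ idx b) := hmono le_sup_right (hidx b)
    simp only [hwd _ _ (add_mem ha hb), hwd _ _ ha, hwd _ _ hb, map_add]
  · intro r a
    simp only [hwd _ _ (Submodule.smul_mem _ r (hidx a)), map_smul, RingHom.id_apply]

end Gluing

section Filtration

variable {R C A : Type*} [CommSemiring R] [AddCommMonoid C] [Module R C] [Coalgebra R C]

structure IsCoalgebraFiltration (F : ℕ → Submodule R C) : Prop where
  mono : Monotone F
  comul_mem : ∀ m, ∀ c ∈ F m, comul (R := R) c ∈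
    ∑ i ∈ Finset.range (m + 1), range (TensorProduct.map (F i).subtype (F (m - i)).subtype)

variable [Semiring A] [Algebra R A] {F : ℕ → Submodule R C}

theorem IsCoalgebraFiltration.le_ker_convMul (hF : IsCoalgebraFiltration F) {m : ℕ}
    {a b : WithConv (C →ₗ[R] A)}
    (hab : ∀ i ≤ m, F i ≤ ker a.ofConv ∨ F (m - i) ≤ ker b.ofConv) :
    F m ≤ ker (a * b).ofConv := by
  intro c hc
  suffices h : ∑ i ∈ Finset.range (m + 1),
      range (TensorProduct.map (F i).subtype (F (m - i)).subtype) ≤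
        ker (mul' R A ∘ₗ TensorProduct.map a.ofConv b.ofConv) from
    h (hF.comul_mem m c hc)
  refine Finset.sum_induction _ (· ≤ _)
    (fun p q hp hq => (Submodule.add_eq_sup p q).trans_le (sup_le hp hq)) bot_le ?_
  intro i hi
  rw [range_le_ker_iff, comp_assoc, ← TensorProduct.map_comp]
  rcases hab i (Nat.lt_succ_iff.mp (Finset.mem_range.mp hi)) with h | h
  · rw [le_ker_iff_comp_subtype_eq_zero.mp h, TensorProduct.map_zero_left, comp_zero]
  · rw [le_ker_iff_comp_subtype_eq_zero.mp h, TensorProduct.map_zero_right, comp_zero]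

theorem IsCoalgebraFiltration.le_ker_convMul_of_le_ker_left (hF : IsCoalgebraFiltration F)
    {m : ℕ} {a : WithConv (C →ₗ[R] A)} (ha : F m ≤ ker a.ofConv) (b : WithConv (C →ₗ[R] A)) :
    F m ≤ ker (a * b).ofConv :=
  hF.le_ker_convMul fun _ hi => .inl ((hF.mono hi).trans ha)

theorem IsCoalgebraFiltration.le_ker_convMul_of_le_ker_right (hF : IsCoalgebraFiltration F)
    {m : ℕ} (a : WithConv (C →ₗ[R] A)) {b : WithConv (C →ₗ[R] A)} (hb : F m ≤ ker b.ofConv) :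
    F m ≤ ker (a * b).ofConv :=
  hF.le_ker_convMul fun _ _ => .inr ((hF.mono (Nat.sub_le _ _)).trans hb)

theorem IsCoalgebraFiltration.le_ker_convMul_add_succ (hF : IsCoalgebraFiltration F)
    {p q : ℕ} {a b : WithConv (C →ₗ[R] A)} (ha : F p ≤ ker a.ofConv) (hb : F q ≤ ker b.ofConv) :
    F (p + q + 1) ≤ ker (a * b).ofConv :=
  hF.le_ker_convMul fun i _ => (le_or_gt i p).imp
    (fun hip => (hF.mono hip).trans ha) (fun hpi => (hF.mono (by omega)).trans hb)

theorem IsCoalgebraFiltration.le_ker_convPow (hF : IsCoalgebraFiltration F) {n : ℕ}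
    {a : WithConv (C →ₗ[R] A)} (ha : F n ≤ ker a.ofConv) (j : ℕ) :
    F (j * (n + 1) + n) ≤ ker (a ^ (j + 1)).ofConv := by
  induction j with
  | zero => simpa using ha
  | succ j ih =>
    rw [pow_succ, show (j + 1) * (n + 1) + n = j * (n + 1) + n + n + 1 by ring]
    exact hF.le_ker_convMul_add_succ ih ha

theorem IsCoalgebraFiltration.le_ker_convPow_succ (hF : IsCoalgebraFiltration F) {n : ℕ}
    {a : WithConv (C →ₗ[R] A)} (ha : F n ≤ ker a.ofConv) (p : ℕ) :
    F p ≤ ker (a ^ (p + 1)).ofConv :=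
  (hF.mono (le_add_right (Nat.le_mul_of_pos_right p n.succ_pos))).trans (hF.le_ker_convPow ha p)

theorem IsCoalgebraFiltration.geom_sum_apply_eq (hF : IsCoalgebraFiltration F) {p m m' : ℕ}
    {a : WithConv (C →ₗ[R] A)} (ha : F p ≤ ker (a ^ m).ofConv) (hm : m ≤ m') :
    ∀ c ∈ F p, (∑ j ∈ Finset.range m', a ^ j) c = (∑ j ∈ Finset.range m, a ^ j) c := by
  intro c hc
  have htail : (∑ j ∈ Finset.Ico m m', a ^ j) c = 0 := by
    rw [ofConv_sum, LinearMap.sum_apply]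
    refine Finset.sum_eq_zero fun j hj => ?_
    rw [← pow_sub_mul_pow a (Finset.mem_Ico.mp hj).1]
    exact hF.le_ker_convMul_of_le_ker_right _ ha hc
  rw [← Finset.sum_range_add_sum_Ico _ hm, ofConv_add, LinearMap.add_apply, htail, add_zero]

end Filtration

section GeomSum

variable {R C A : Type*} [CommSemiring R] [AddCommMonoid C] [Module R C] [Coalgebra R C]
  [Ring A] [Algebra R A] {F : ℕ → Submodule R C}

theorem IsCoalgebraFiltration.one_sub_convMul_apply_eq_one_of_eqOn_geom_sum
    (hF : IsCoalgebraFiltration F) {p m : ℕ} {a z : WithConv (C →ₗ[R] A)}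
    (ha : F p ≤ ker (a ^ m).ofConv)
    (hz : ∀ c ∈ F p, z c = (∑ j ∈ Finset.range m, a ^ j) c) :
    ∀ c ∈ F p, ((1 - a) * z) c = (1 : WithConv (C →ₗ[R] A)) c ∧
      (z * (1 - a)) c = (1 : WithConv (C →ₗ[R] A)) c := by
  set s := ∑ j ∈ Finset.range m, a ^ j
  have hzs : F p ≤ ker (z - s).ofConv := fun c hc => by simp [hz c hc]
  have hright_inv : (1 - a) * z - 1 = (1 - a) * (z - s) - a ^ m := by
    rw [mul_sub, mul_neg_geom_sum]; abel
  have hleft_inv : z * (1 - a) - 1 = (z - s) * (1 - a) - a ^ m := by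
    rw [sub_mul, geom_sum_mul_neg]; abel
  intro c hc
  have hdiff_right_inv := mem_ker.1 (hF.le_ker_convMul_of_le_ker_right (1 - a) hzs hc)
  have hdiff_left_inv := mem_ker.1 (hF.le_ker_convMul_of_le_ker_left hzs (1 - a) hc)
  have ham := mem_ker.1 (ha hc)
  constructor
  · rw [← sub_eq_zero, ← LinearMap.sub_apply, ← ofConv_sub, hright_inv, ofConv_sub,
      LinearMap.sub_apply, hdiff_right_inv, ham, sub_zero]
  · rw [← sub_eq_zero, ← LinearMap.sub_apply, ← ofConv_sub, hleft_inv, ofConv_sub,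
      LinearMap.sub_apply, hdiff_left_inv, ham, sub_zero]

end GeomSum

theorem conv_inverse_of_unit_plus_nilpotent {k : Type*} [Field k] {C A : Type*}
    [AddCommGroup C] [Module k C] [Coalgebra k C]
    [Ring A] [Algebra k A]
    (F : ℕ → Submodule k C)
    (hmono : Monotone F)
    (hexh : ⨆ n, F n = ⊤)
    (hfilt : ∀ m : ℕ, ∀ c ∈ F m, Coalgebra.comul (R := k) c ∈
      ∑ i ∈ Finset.range (m + 1),
        LinearMap.range (TensorProduct.map (F i).subtype (F (m - i)).subtype))
    (n : ℕ) (f : C →ₗ[k] A) (hf : ∀ c ∈ F n, f c = 0) :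
    ∃ g : C →ₗ[k] A,
      conv (convUnit k C A + f) g = convUnit k C A ∧
      conv g (convUnit k C A + f) = convUnit k C A ∧
      ∀ c ∈ F (n + 1), g c = (convUnit k C A - f) c := by
  have hF : IsCoalgebraFiltration F := ⟨hmono, hfilt⟩
  set x : WithConv (C →ₗ[k] A) := -toConv f
  have hx : F n ≤ ker x.ofConv := fun c hc => by simp [x, hf c hc]
  obtain ⟨g, hg⟩ := Submodule.exists_linearMap_eqOn_of_monotone hmono hexh
    (fun p => (∑ j ∈ Finset.range (p + 1), x ^ j).ofConv)
    (fun p _ hpq => hF.geom_sum_apply_eq (hF.le_ker_convPow_succ hx p) (by omega))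
  have hinv (c : C) : ((1 - x) * toConv g) c = (1 : WithConv (C →ₗ[k] A)) c ∧
      (toConv g * (1 - x)) c = (1 : WithConv (C →ₗ[k] A)) c := by
    obtain ⟨p, hp⟩ := Submodule.exists_mem_of_iSup_eq_top hmono.directed_le hexh c
    exact hF.one_sub_convMul_apply_eq_one_of_eqOn_geom_sum (hF.le_ker_convPow_succ hx p) (hg p)
      c hp
  have hunit : toConv (convUnit k C A + f) = 1 - x := by
    rw [toConv_add, sub_neg_eq_add]; rfl
  refine ⟨g, ?_, ?_, fun c hc => ?_⟩
  · rw [conv_eq_ofConv_convMul, hunit, convUnit_eq_ofConv_one]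
    ext c
    exact (hinv c).1
  · rw [conv_eq_ofConv_convMul, hunit, convUnit_eq_ofConv_one]
    ext c
    exact (hinv c).2
  · have hx2 : F (n + 1) ≤ ker (x ^ 2).ofConv :=
      (hmono (by omega)).trans (hF.le_ker_convPow hx 1)
    rw [hg (n + 1) c hc, hF.geom_sum_apply_eq hx2 (by omega) c hc]
    simp [Finset.sum_range_succ, x, convUnit, sub_eq_add_neg]
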